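/- arXiv:2106.15906 — 9 statements merged into one kernel-verified Lean document; each statement's English description precedes it below -/
import Mathlib

section
/- Let p be a prime number, let J and r be positive integers, and let G be a finite group containing a normal abelian subgroup à of index at most J such that à can be generated by r elements. Then G contains a normal abelian subgroup A that can be generated by at most r elements, whose order is coprime to p, and whose index in G is at most J·|G_p|, where G_p is a p-Sylow subgroup of G. -/
/-!
Take `A` to be the subgroup of `p ^ k`-th powers in `A₀`, where `p ^ k` is the `p`-part of
`|A₀|`. As the image of an endomorphism of the abelian group `A₀` it is generated by `r`
elements and characteristic in `A₀`, hence normal in `G`. Its elements are killed by the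
`p`-free part of `|A₀|`, so `p ∤ |A|`; and `A₀ ⧸ A` is a `p`-group, so `[A₀ : A]` is a power
of `p` dividing `|G|`, hence at most `|G_p|`.
-/

open Function Nat

lemma exists_finset_card_le_closure_eq_top_of_surjective {G H : Type*} [Group G] [Group H]
    {f : G →* H} (hf : Surjective f) {r : ℕ}
    (hG : ∃ S : Finset G, S.card ≤ r ∧ Subgroup.closure (S : Set G) = ⊤) :
    ∃ T : Finset H, T.card ≤ r ∧ Subgroup.closure (T : Set H) = ⊤ := by
  classical
  obtain ⟨S, hcard, hclosure⟩ := hG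
  refine ⟨S.image f, Finset.card_image_le.trans hcard, ?_⟩
  rw [Finset.coe_image, ← MonoidHom.map_closure, hclosure, Subgroup.map_top_of_surjective f hf]

lemma coprime_card_of_forall_pow_eq_one {G : Type*} [Group G] [Finite G] {p m : ℕ}
    (hp : p.Prime) (hm : ¬p ∣ m) (h : ∀ g : G, g ^ m = 1) : (Nat.card G).Coprime p := by
  have : Fact p.Prime := ⟨hp⟩
  rw [Nat.coprime_comm, hp.coprime_iff_not_dvd]
  intro hdvd
  obtain ⟨g, hg⟩ := exists_prime_orderOf_dvd_card' p hdvd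
  exact hm (hg ▸ orderOf_dvd_of_pow_eq_one (h g))

lemma index_le_card_sylow_of_isPGroup_quotient {G K : Type*} [Group G] [Finite G] [Group K]
    [Finite K] {p : ℕ} [Fact p.Prime] {L : Subgroup K} [L.Normal] (hL : IsPGroup p (K ⧸ L))
    (hK : Nat.card K ∣ Nat.card G) (P : Sylow p G) : L.index ≤ Nat.card P := by
  obtain ⟨j, hj⟩ := IsPGroup.iff_card.mp hL
  rw [L.index_eq_card, hj]
  exact Nat.le_of_dvd Nat.card_pos
    (P.pow_dvd_card_of_pow_dvd_card ((hj ▸ L.index_eq_card ▸ L.index_dvd_card).trans hK))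

section CommGroup

variable {K : Type*} [CommGroup K]

instance characteristic_range_powMonoidHom (n : ℕ) :
    (powMonoidHom (α := K) n).range.Characteristic :=
  Subgroup.characteristic_iff_map_eq.mpr fun e ↦ MulEquiv.map_range_powMonoidHom e n

lemma isPGroup_quotient_range_powMonoidHom (p k : ℕ) :
    IsPGroup p (K ⧸ (powMonoidHom (α := K) (p ^ k)).range) := by
  rintro ⟨x⟩
  exact ⟨k, (QuotientGroup.eq_one_iff _).mpr ⟨x, rfl⟩⟩

lemma coprime_card_range_powMonoidHom_ordProj [Finite K] {p : ℕ} (hp : p.Prime) :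
    (Nat.card (powMonoidHom (α := K) (ordProj[p] (Nat.card K))).range).Coprime p := by
  refine coprime_card_of_forall_pow_eq_one hp
    (Nat.not_dvd_ordCompl hp (Nat.card_pos (α := K)).ne') ?_
  rintro ⟨_, x, rfl⟩
  ext
  simp only [powMonoidHom_apply, SubgroupClass.coe_pow, ← pow_mul,
    Nat.ordProj_mul_ordCompl_eq_self, pow_card_eq_one', OneMemClass.coe_one]

end CommGroup

theorem normal_abelian_coprime_of_normal_abelian_general
    (p : ℕ) (hp : p.Prime) (J r : ℕ)
    (G : Type*) [Group G] [Finite G]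
    (A₀ : Subgroup G) (hnorm : A₀.Normal) (hcomm : IsMulCommutative A₀)
    (hindex : A₀.index ≤ J)
    (hgen : ∃ S : Finset ↥A₀, S.card ≤ r ∧ Subgroup.closure (S : Set ↥A₀) = ⊤)
    (Gp : Sylow p G) :
    ∃ A : Subgroup G, A.Normal ∧ IsMulCommutative A ∧
      (∃ S : Finset ↥A, S.card ≤ r ∧ Subgroup.closure (S : Set ↥A) = ⊤) ∧
      Nat.Coprime (Nat.card A) p ∧
      A.index ≤ J * Nat.card Gp := by
  have : Fact p.Prime := ⟨hp⟩
  open IsMulCommutative in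
  let B := (powMonoidHom (α := A₀) (ordProj[p] (Nat.card A₀))).range
  refine ⟨B.map A₀.subtype, inferInstance, inferInstance, ?_, ?_, ?_⟩
  · exact exists_finset_card_le_closure_eq_top_of_surjective
      (A₀.subtype.subgroupMap_surjective B) <|
      exists_finset_card_le_closure_eq_top_of_surjective (MonoidHom.rangeRestrict_surjective _) hgen
  · rw [Subgroup.card_map_of_injective A₀.subtype_injective]
    exact coprime_card_range_powMonoidHom_ordProj hp
  · rw [Subgroup.index_map_subtype, mul_comm]
    exact Nat.mul_le_mul hindex (index_le_card_sylow_of_isPGroup_quotient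
      (isPGroup_quotient_range_powMonoidHom _ _) A₀.card_subgroup_dvd_card Gp)

/-- If a finite group `G` contains a normal abelian subgroup `A₀` of index at most `J`
generated by `r` elements, then `G` contains a normal abelian subgroup `A` generated by at
most `r` elements, of order coprime to `p` and of index at most `J * |G_p|`, where `G_p` is
a `p`-Sylow subgroup of `G`. -/
theorem normal_abelian_coprime_of_normal_abelian
    (p : ℕ) (hp : p.Prime) (J r : ℕ) (hJ : 0 < J) (hr : 0 < r)
    (G : Type*) [Group G] [Finite G]
    (A₀ : Subgroup G) (hnorm : A₀.Normal) (hcomm : IsMulCommutative A₀)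
    (hindex : A₀.index ≤ J)
    (hgen : ∃ S : Finset ↥A₀, S.card ≤ r ∧ Subgroup.closure (S : Set ↥A₀) = ⊤)
    (Gp : Sylow p G) :
    ∃ A : Subgroup G, A.Normal ∧ IsMulCommutative A ∧
      (∃ S : Finset ↥A, S.card ≤ r ∧ Subgroup.closure (S : Set ↥A) = ⊤) ∧
      Nat.Coprime (Nat.card A) p ∧
      A.index ≤ J * Nat.card Gp :=
  normal_abelian_coprime_of_normal_abelian_general p hp J r G A₀ hnorm hcomm hindex hgen Gp
end

section
/- Let p be a prime number, let J be a positive integer, let c be a non-negative integer, and let G be a finite group containing a normal subgroup à of index at most J such that à is nilpotent of class at most c. Then G contains a normal subgroup A that is nilpotent of class at most c, whose order is coprime to p, and whose index in G is at most J·|G_p|, where G_p is a p-Sylow subgroup of G. -/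
/-!
Inside the nilpotent normal subgroup `A₀`, take the largest normal subgroup `O` of order prime
to `p` (the `p'`-core). It is characteristic in `A₀`, hence normal in `G`, and it inherits the
nilpotency class of `A₀`. Since `A₀` is nilpotent, each of its Sylow `q`-subgroups with `q ≠ p`
is normal, hence contained in `O`, so `[A₀ : O]` is a power of `p` dividing `|G|`, and therefore
at most `|G_p|`.
-/

namespace Subgroup

variable {G : Type*} [Group G]

theorem card_sup_dvd_card_mul_card (H K : Subgroup G) [K.Normal] :
    Nat.card ↥(H ⊔ K) ∣ Nat.card H * Nat.card K := by
  rw [← relIndex_bot_left (H ⊔ K), ← relIndex_mul_relIndex ⊥ K (H ⊔ K) bot_le le_sup_right,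
    relIndex_sup_right, relIndex_bot_left, mul_comm]
  exact mul_dvd_mul_right (relIndex_dvd_card K H) _

theorem upperCentralSeries_eq_top_of_injective {H : Type*} [Group H] {f : H →* G}
    (hf : Function.Injective f) {c : ℕ} (hG : upperCentralSeries G c = ⊤) :
    upperCentralSeries H c = ⊤ := by
  have : Group.IsNilpotent G := ⟨c, hG⟩
  have hrange : upperCentralSeries f.range c = ⊤ :=
    upperCentralSeries_eq_top_iff_nilpotencyClass_le.mpr
      ((nilpotencyClass_le f.range).trans (upperCentralSeries_eq_top_iff_nilpotencyClass_le.mp hG))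
  rw [← comap_upperCentralSeries (MonoidHom.ofInjective hf), hrange, comap_top]

/-- The `p'`-core `O_{p'}(G)`; for finite `G` it is the largest normal subgroup of order prime
to `p`. -/
def pPrimeCore (p : ℕ) (G : Type*) [Group G] : Subgroup G :=
  sSup {K : Subgroup G | K.Normal ∧ (Nat.card K).Coprime p}

variable {p : ℕ}

theorem supClosed_normal_coprime_card :
    SupClosed {K : Subgroup G | K.Normal ∧ (Nat.card K).Coprime p} := by
  rintro H ⟨hH, hHp⟩ K ⟨hK, hKp⟩
  exact ⟨sup_normal H K,
    (Nat.Coprime.mul_left hHp hKp).coprime_dvd_left (card_sup_dvd_card_mul_card H K)⟩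

theorem le_pPrimeCore {K : Subgroup G} [hK : K.Normal] (hKp : (Nat.card K).Coprime p) :
    K ≤ pPrimeCore p G :=
  le_sSup ⟨hK, hKp⟩

variable [Finite G]

theorem pPrimeCore_normal_and_coprime_card :
    (pPrimeCore p G).Normal ∧ (Nat.card (pPrimeCore p G)).Coprime p :=
  supClosed_normal_coprime_card.sSup_mem (Set.toFinite _) ⟨inferInstance, by simp⟩ subset_rfl

instance : (pPrimeCore p G).Normal := pPrimeCore_normal_and_coprime_card.1

theorem coprime_card_pPrimeCore : (Nat.card (pPrimeCore p G)).Coprime p :=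
  pPrimeCore_normal_and_coprime_card.2

instance : (pPrimeCore p G).Characteristic := by
  refine characteristic_iff_map_le.mpr fun φ => ?_
  have := (inferInstance : (pPrimeCore p G).Normal).map φ.toMonoidHom φ.surjective
  exact le_pPrimeCore
    ((card_map_of_injective (f := φ.toMonoidHom) φ.injective).symm ▸ coprime_card_pPrimeCore)

theorem exists_index_pPrimeCore_eq_pow [Group.IsNilpotent G] (hp : p.Prime) :
    ∃ k, (pPrimeCore p G).index = p ^ k := by
  refine ⟨_, Nat.eq_prime_pow_of_unique_prime_dvd index_ne_zero_of_finite fun {q} hq hdvd => ?_⟩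
  by_contra hqp
  have := Fact.mk hq
  let Q : Sylow q G := default
  have hQ : (Q : Subgroup G) ≤ pPrimeCore p G := by
    obtain ⟨n, hn⟩ := IsPGroup.iff_card.mp Q.isPGroup'
    exact le_pPrimeCore (hn ▸ ((Nat.coprime_primes hq hp).mpr hqp).pow_left n)
  exact Q.not_dvd_index (hdvd.trans (index_dvd_of_le hQ))

end Subgroup

theorem normal_nilpotent_coprime_of_normal_nilpotent_general
    (p : ℕ) (hp : p.Prime) (J c : ℕ)
    (G : Type*) [Group G] [Finite G]
    (A₀ : Subgroup G) (hnorm : A₀.Normal)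
    (hnilp : upperCentralSeries ↥A₀ c = ⊤)
    (hindex : A₀.index ≤ J)
    (Gp : Sylow p G) :
    ∃ A : Subgroup G, A.Normal ∧ upperCentralSeries ↥A c = ⊤ ∧
      Nat.Coprime (Nat.card A) p ∧
      A.index ≤ J * Nat.card Gp := by
  have := Fact.mk hp
  have : Group.IsNilpotent A₀ := ⟨c, hnilp⟩
  set O := Subgroup.pPrimeCore p A₀
  obtain ⟨k, hk⟩ := Subgroup.exists_index_pPrimeCore_eq_pow (G := A₀) hp
  have hkG : p ^ k ∣ Nat.card G :=
    hk ▸ O.index_dvd_card.trans (Subgroup.card_subgroup_dvd_card A₀)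
  refine ⟨O.map A₀.subtype, inferInstance, ?_, ?_, ?_⟩
  · exact Subgroup.upperCentralSeries_eq_top_of_injective
      (Subgroup.inclusion_injective (Subgroup.map_subtype_le O)) hnilp
  · exact (Subgroup.card_map_of_injective A₀.subtype_injective).symm ▸
      Subgroup.coprime_card_pPrimeCore
  · rw [Subgroup.index_map_subtype, hk, mul_comm]
    exact Nat.mul_le_mul hindex (Nat.le_of_dvd Nat.card_pos (Gp.pow_dvd_card_of_pow_dvd_card hkG))

/-- If a finite group `G` contains a normal subgroup `A₀` of index at most `J` that is
nilpotent of class at most `c`, then `G` contains a normal subgroup `A` that is nilpotent of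
class at most `c`, of order coprime to `p` and of index at most `J * |G_p|`, where `G_p` is
a `p`-Sylow subgroup of `G`. -/
theorem normal_nilpotent_coprime_of_normal_nilpotent
    (p : ℕ) (hp : p.Prime) (J c : ℕ) (hJ : 0 < J)
    (G : Type*) [Group G] [Finite G]
    (A₀ : Subgroup G) (hnorm : A₀.Normal)
    (hnilp : upperCentralSeries ↥A₀ c = ⊤)
    (hindex : A₀.index ≤ J)
    (Gp : Sylow p G) :
    ∃ A : Subgroup G, A.Normal ∧ upperCentralSeries ↥A c = ⊤ ∧
      Nat.Coprime (Nat.card A) p ∧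
      A.index ≤ J * Nat.card Gp :=
  normal_nilpotent_coprime_of_normal_nilpotent_general p hp J c G A₀ hnorm hnilp hindex Gp
end

section
/- Let G be a finite group, let G' be a normal subgroup of G, and let A' be a subgroup of G' that is normal in G'. Denote by B the index of G' in G and by J the index of A' in G'. Then A' contains a subgroup A such that A is normal in G and the index of A in G is at most B·J^B. -/
/-! The normal core of `A'` is the intersection of its conjugates. Since `G'` normalizes `A'`,
the conjugate by `g` depends only on the coset `g G'`, so the core is an intersection of
`[G : G']` conjugates; each has index `[G' : A']` in `G'` because `G'` is normal. Hence the core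
has index at most `[G' : A'] ^ [G : G']` in `G'`; multiplying by `[G : G']` gives its index in `G`. -/

namespace Subgroup

variable {G : Type*} [Group G] {H N : Subgroup G}

theorem map_conj_out_eq_map_conj (hN : N ≤ normalizer H) (g : G) :
    H.map (MulAut.conj (g : G ⧸ N).out) = H.map (MulAut.conj g : G →* G) := by
  obtain ⟨n, hn⟩ := QuotientGroup.mk_out_eq_mul N g
  rw [hn, map_mul, MulAut.mul_def, MulEquiv.coe_monoidHom_trans, ← map_map,
    mem_normalizer_iff_map_conj_eq.mp (hN n.2)]

theorem normalCore_eq_iInf_map_conj_out (hN : N ≤ normalizer H) :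
    H.normalCore = ⨅ q : G ⧸ N, H.map (MulAut.conj q.out) := by
  rw [normalCore_eq_iInf_map_conj]
  refine le_antisymm (le_iInf fun q => iInf_le _ q.out) (le_iInf fun g => ?_)
  rw [← map_conj_out_eq_map_conj hN g]
  exact iInf_le _ (g : G ⧸ N)

theorem relIndex_map_conj_of_normal [N.Normal] (g : G) :
    (H.map (MulAut.conj g)).relIndex N = H.relIndex N := by
  conv_lhs => rw [← Normal.map_conj_eq N g]
  exact relIndex_map_map_of_injective H N (MulAut.conj g).injective

theorem relIndex_normalCore_le [N.Normal] [N.FiniteIndex] (hN : N ≤ normalizer H) :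
    H.normalCore.relIndex N ≤ H.relIndex N ^ N.index := by
  have := Fintype.ofFinite (G ⧸ N)
  calc H.normalCore.relIndex N
      ≤ ∏ q : G ⧸ N, (H.map (MulAut.conj q.out)).relIndex N := by
        rw [normalCore_eq_iInf_map_conj_out hN]
        exact relIndex_iInf_le _
    _ = H.relIndex N ^ N.index := by
        simp only [relIndex_map_conj_of_normal, Finset.prod_const, Finset.card_univ,
          index, Nat.card_eq_fintype_card]

theorem index_normalCore_le [N.Normal] (hHN : H ≤ N) (hN : N ≤ normalizer H) :
    H.normalCore.index ≤ N.index * H.relIndex N ^ N.index := by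
  rw [← relIndex_mul_index (H.normalCore_le.trans hHN), mul_comm]
  -- `N.index = 0` encodes infinite index, where both sides vanish.
  rcases eq_or_ne N.index 0 with hzero | hfin
  · simp [hzero]
  · have : N.FiniteIndex := ⟨hfin⟩
    exact Nat.mul_le_mul_left _ (relIndex_normalCore_le hN)

end Subgroup

theorem exists_normal_subgroup_of_normal_in_normal_general
    (G : Type*) [Group G] (G' : Subgroup G) (hG' : G'.Normal)
    (A' : Subgroup G) (hle : A' ≤ G') (hA' : (A'.subgroupOf G').Normal) :
    ∃ A : Subgroup G, A ≤ A' ∧ A.Normal ∧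
      A.index ≤ G'.index * (A'.subgroupOf G').index ^ G'.index :=
  ⟨A'.normalCore, A'.normalCore_le, A'.normalCore_normal,
    Subgroup.index_normalCore_le hle ((Subgroup.normal_subgroupOf_iff_le_normalizer hle).mp hA')⟩

/-- Let `G` be a finite group, `G'` a normal subgroup of `G`, and `A'` a subgroup of `G'`
that is normal in `G'`. If `B` is the index of `G'` in `G` and `J` is the index of `A'` in
`G'`, then `A'` contains a subgroup `A` that is normal in `G` of index at most `B * J ^ B`. -/
theorem exists_normal_subgroup_of_normal_in_normal
    (G : Type*) [Group G] [Finite G] (G' : Subgroup G) (hG' : G'.Normal)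
    (A' : Subgroup G) (hle : A' ≤ G') (hA' : (A'.subgroupOf G').Normal) :
    ∃ A : Subgroup G, A ≤ A' ∧ A.Normal ∧
      A.index ≤ G'.index * (A'.subgroupOf G').index ^ G'.index :=
  exists_normal_subgroup_of_normal_in_normal_general G G' hG' A' hle hA'
end

section
/- Let Γ be a group and let N be a normal subgroup of Γ such that the quotient group Γ/N has bounded finite subgroups (i.e., there exists a constant B such that every finite subgroup of Γ/N has order at most B). Suppose that N is Jordan, i.e., there exists a constant J such that every finite subgroup of N contains a normal abelian subgroup of index at most J. Then Γ is Jordan: there exists a constant J' such that every finite subgroup of Γ contains a normal abelian subgroup of index at most J'. -/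
/-!
For a finite `G ≤ Γ`, the subgroup `G ∩ N` is the kernel of `G → Γ/N`, so its index is at most
the bound `B`; it embeds in `N`, hence has an abelian subgroup of index at most `J`, which has
index at most `J * B` in `G`. The normal core of that subgroup is still abelian, and since it is
the kernel of the action of `G` on the cosets, its index is at most `(J * B)!`.
-/

open Nat

namespace Subgroup

variable {G : Type*} [Group G]

theorem index_normalCore_dvd_factorial (H : Subgroup G) [H.FiniteIndex] :
    H.normalCore.index ∣ H.index ! := by
  rw [normalCore_eq_ker, index_ker, index_eq_card, ← Nat.card_perm]
  exact card_subgroup_dvd_card (MulAction.toPermHom G (G ⧸ H)).range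

theorem isMulCommutative_of_le {H K : Subgroup G} (hHK : H ≤ K) [IsMulCommutative K] :
    IsMulCommutative H :=
  .of_setLike_mul_comm fun _ ha _ hb ↦ setLike_mul_comm (hHK ha) (hHK hb)

theorem exists_normal_isMulCommutative_index_le_factorial (A : Subgroup G) [A.FiniteIndex]
    [IsMulCommutative A] :
    ∃ K : Subgroup G, K.Normal ∧ IsMulCommutative K ∧ K.index ≤ A.index ! :=
  ⟨A.normalCore, A.normalCore_normal, isMulCommutative_of_le A.normalCore_le,
    Nat.le_of_dvd (factorial_pos _) A.index_normalCore_dvd_factorial⟩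

end Subgroup

theorem MonoidHom.exists_isMulCommutative_index_le_of_injective {H M : Type*} [Group H]
    [Group M] [Finite H] {J : ℕ}
    (hJ : ∀ G : Subgroup M, Finite G → ∃ A : Subgroup G, IsMulCommutative A ∧ A.index ≤ J)
    {f : H →* M} (hf : Function.Injective f) :
    ∃ A : Subgroup H, IsMulCommutative A ∧ A.index ≤ J := by
  obtain ⟨A, hA, hAJ⟩ := hJ f.range (.of_surjective _ f.rangeRestrict_surjective)
  refine ⟨A.comap f.rangeRestrict,
    A.comap_injective_isMulCommutative (f.rangeRestrict_injective_iff.2 hf), ?_⟩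
  rwa [Subgroup.index_comap_of_surjective _ f.rangeRestrict_surjective]

theorem Subgroup.index_subgroupOf_le_of_card_le {Γ : Type*} [Group Γ] (N : Subgroup Γ) [N.Normal]
    {B : ℕ} (hB : ∀ Q : Subgroup (Γ ⧸ N), Finite Q → Nat.card Q ≤ B) (G : Subgroup Γ) [Finite G] :
    (N.subgroupOf G).index ≤ B := by
  have hker : ((QuotientGroup.mk' N).comp G.subtype).ker = N.subgroupOf G := by
    rw [← MonoidHom.comap_ker, QuotientGroup.ker_mk']; rfl
  rw [← hker, Subgroup.index_ker]
  exact hB _ (.of_surjective _ (MonoidHom.rangeRestrict_surjective _))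

/-- If `N` is a normal subgroup of `Γ` such that `Γ/N` has bounded finite subgroups and `N`
is Jordan, then `Γ` is Jordan. -/
theorem jordan_of_normal_jordan_quotient_bounded
    (Γ : Type*) [Group Γ] (N : Subgroup Γ) (hN : N.Normal)
    (hbound : ∃ B : ℕ, ∀ Q : Subgroup (Γ ⧸ N), Finite Q → Nat.card Q ≤ B)
    (hJordan : ∃ J : ℕ, 0 < J ∧ ∀ G : Subgroup ↥N, Finite G →
      ∃ A : Subgroup ↥G, A.Normal ∧ IsMulCommutative A ∧ A.index ≤ J) :
    ∃ J' : ℕ, 0 < J' ∧ ∀ G : Subgroup Γ, Finite G →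
      ∃ A : Subgroup ↥G, A.Normal ∧ IsMulCommutative A ∧ A.index ≤ J' := by
  obtain ⟨B, hB⟩ := hbound
  obtain ⟨J, -, hJ⟩ := hJordan
  refine ⟨(J * B)!, factorial_pos _, fun G hG => ?_⟩
  let H := N.subgroupOf G
  let ι : H →* N := (G.subtype.comp H.subtype).codRestrict N fun x => x.2
  have hι : Function.Injective ι := fun x y hxy =>
    Subtype.ext (Subtype.ext (congrArg N.subtype hxy))
  obtain ⟨A, hA, hAJ⟩ := ι.exists_isMulCommutative_index_le_of_injective
    (fun K hK => (hJ K hK).imp fun _ => And.right) hι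
  obtain ⟨K, hK, hKA, hKi⟩ := (A.map H.subtype).exists_normal_isMulCommutative_index_le_factorial
  refine ⟨K, hK, hKA, hKi.trans (factorial_le ?_)⟩
  rw [Subgroup.index_map_subtype]
  exact Nat.mul_le_mul hAJ (N.index_subgroupOf_le_of_card_le hB G)
end

section
/- Let p be a prime number, let c be a non-negative integer, let Γ be a group, and let N be a normal subgroup of Γ such that the quotient group Γ/N has bounded finite subgroups. Suppose that N is nilpotently p-Jordan of class at most c, i.e., there exist constants J and e such that every finite subgroup G' of N contains a normal subgroup of order coprime to p and index at most J·|G'_p|^e that is nilpotent of class at most c, where G'_p is a p-Sylow subgroup of G'. Then Γ is nilpotently p-Jordan of class at most c: there exist constants J' and e' such that every finite subgroup G of Γ contains a normal subgroup of order coprime to p and index at most J'·|G_p|^{e'} that is nilpotent of class at most c, where G_p is a p-Sylow subgroup of G. -/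
/-!
For a finite `G ≤ Γ`, the subgroup `K = G ∩ N` has index at most `B` in `G`, since `G/K` embeds
in `Γ/N`. The witness `M ⊴ K` given by the hypothesis on `N` is normalized by `K`, so it has at
most `[G : K]` conjugates in `G`; its normal core in `G` therefore has index at most
`[G : M]^[G : K] ≤ ([K : M] B)^B`. Nilpotency of class `≤ c` and orders prime to `p` pass to
subgroups, and a `p`-Sylow subgroup of `K` is no larger than one of `G`.
-/

namespace Subgroup

variable {G : Type*} [Group G]

theorem upperCentralSeries_eq_top_iff_lowerCentralSeries_eq_bot (S : Subgroup G) {n : ℕ} :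
    upperCentralSeries S n = ⊤ ↔ S.lowerCentralSeries n = ⊥ := by
  rw [← lowerCentralSeries_eq_bot_iff_upperCentralSeries_eq_top,
    ← top_subtype_lowerCentralSeries S n, ← (map_injective S.subtype_injective).eq_iff, map_bot]

theorem upperCentralSeries_eq_top_of_le {H K : Subgroup G} (hHK : H ≤ K) {n : ℕ}
    (h : upperCentralSeries K n = ⊤) : upperCentralSeries H n = ⊤ := by
  rw [upperCentralSeries_eq_top_iff_lowerCentralSeries_eq_bot, ← le_bot_iff] at *
  exact (lowerCentralSeries_mono n hHK).trans h

theorem upperCentralSeries_map_eq_top {G' : Type*} [Group G'] (f : G →* G') {S : Subgroup G}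
    {n : ℕ} (h : upperCentralSeries S n = ⊤) : upperCentralSeries (S.map f) n = ⊤ := by
  rw [upperCentralSeries_eq_top_iff_lowerCentralSeries_eq_bot] at *
  rw [← map_lowerCentralSeries, h, map_bot]

theorem index_normalCore_le_pow {H K : Subgroup G} (hK : K ≤ normalizer (H : Set G))
    [K.FiniteIndex] : H.normalCore.index ≤ H.index ^ K.index := by
  have : Fintype (G ⧸ K) := Fintype.ofFinite _
  let T : G ⧸ K → Subgroup G := fun q => H.map (MulAut.conj q.out)
  have hT : ∀ g : G, T g = H.map (MulAut.conj g) := by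
    intro g
    obtain ⟨k, hk⟩ := QuotientGroup.mk_out_eq_mul K g
    simp only [T, hk, map_mul, MulAut.mul_def, MulEquiv.coe_monoidHom_trans, ← map_map,
      mem_normalizer_iff_map_conj_eq.mp (hK k.2)]
  calc H.normalCore.index = (⨅ q, T q).index := by
        rw [normalCore_eq_iInf_map_conj, ← QuotientGroup.mk_surjective.iInf_comp T]
        simp only [hT]
    _ ≤ ∏ q, (T q).index := index_iInf_le T
    _ = H.index ^ K.index := by
        simp only [T, index_map_equiv, Finset.prod_const, Finset.card_univ]
        rw [index_eq_card K, Nat.card_eq_fintype_card]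

theorem index_subgroupOf_eq_card_map (N H : Subgroup G) [N.Normal] :
    (N.subgroupOf H).index = Nat.card (H.map (QuotientGroup.mk' N)) := by
  have : N.subgroupOf H = ((QuotientGroup.mk' N).comp H.subtype).ker := by
    ext; simp [mem_subgroupOf]
  rw [this, index_ker, MonoidHom.range_comp, range_subtype]

def subgroupOfInclusion (H K : Subgroup G) : H.subgroupOf K →* H :=
  (K.subtype.comp (H.subgroupOf K).subtype).codRestrict H fun x => x.2

theorem subgroupOfInclusion_injective (H K : Subgroup G) :
    Function.Injective (subgroupOfInclusion H K) :=
  fun _ _ h => by ext; exact congrArg (fun z : H => (z : G)) h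

theorem range_subgroupOfInclusion (H K : Subgroup G) :
    (subgroupOfInclusion H K).range = K.subgroupOf H := by
  ext x
  constructor
  · rintro ⟨y, rfl⟩
    exact y.1.2
  · intro hx
    exact ⟨⟨⟨x, hx⟩, x.2⟩, rfl⟩

end Subgroup

theorem Sylow.card_le_card_of_injective {p : ℕ} [Fact p.Prime] {H G : Type*} [Group H] [Group G]
    [Finite G] {f : H →* G} (hf : Function.Injective f) (P : Sylow p H) (Q : Sylow p G) :
    Nat.card P ≤ Nat.card Q := by
  obtain ⟨Q', hQ'⟩ := (P.2.map f).exists_le_sylow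
  calc Nat.card P = Nat.card ((P : Subgroup H).map f) := (Subgroup.card_map_of_injective hf).symm
    _ ≤ Nat.card Q' := Subgroup.card_le_of_le hQ'
    _ = Nat.card Q := by rw [Sylow.card_eq_multiplicity, Sylow.card_eq_multiplicity]

theorem exists_normal_nilpotent_coprime_of_injective {p c : ℕ} {H G : Type*} [Group H] [Group G]
    {ι : H →* G} (hι : Function.Injective ι) [ι.range.FiniteIndex] (M : Subgroup H) [M.Normal]
    (hMc : Subgroup.upperCentralSeries M c = ⊤) (hMp : Nat.Coprime (Nat.card M) p) :
    ∃ M' : Subgroup G, M'.Normal ∧ Subgroup.upperCentralSeries M' c = ⊤ ∧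
      Nat.Coprime (Nat.card M') p ∧ M'.index ≤ (M.index * ι.range.index) ^ ι.range.index := by
  have hnormalizer : ι.range ≤ Subgroup.normalizer (M.map ι : Set G) := by
    simpa [Subgroup.normalizer_eq_top, ← MonoidHom.range_eq_map] using
      Subgroup.le_normalizer_map (H := M) ι
  refine ⟨(M.map ι).normalCore, inferInstance, ?_, ?_, ?_⟩
  · exact Subgroup.upperCentralSeries_eq_top_of_le (M.map ι).normalCore_le
      (Subgroup.upperCentralSeries_map_eq_top ι hMc)
  · refine hMp.coprime_dvd_left ?_
    rw [← Subgroup.card_map_of_injective hι]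
    exact Subgroup.card_dvd_of_le (M.map ι).normalCore_le
  · rw [← M.index_map_of_injective hι]
    exact Subgroup.index_normalCore_le_pow hnormalizer

/-- If `N` is a normal subgroup of `Γ` such that `Γ/N` has bounded finite subgroups and `N`
is nilpotently `p`-Jordan of class at most `c`, then `Γ` is nilpotently `p`-Jordan of class
at most `c`. -/
theorem nilpotently_p_jordan_of_normal_quotient_bounded
    (p : ℕ) (hp : p.Prime) (c : ℕ)
    (Γ : Type*) [Group Γ] (N : Subgroup Γ) (hN : N.Normal)
    (hbound : ∃ B : ℕ, ∀ Q : Subgroup (Γ ⧸ N), Finite Q → Nat.card Q ≤ B)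
    (hpJordan : ∃ J e : ℕ, 0 < J ∧ ∀ G' : Subgroup ↥N, Finite G' →
      ∀ G'p : Sylow p ↥G',
        ∃ M : Subgroup ↥G', M.Normal ∧ upperCentralSeries ↥M c = ⊤ ∧
          Nat.Coprime (Nat.card M) p ∧
          M.index ≤ J * (Nat.card G'p) ^ e) :
    ∃ J' e' : ℕ, 0 < J' ∧ ∀ G : Subgroup Γ, Finite G →
      ∀ Gp : Sylow p ↥G,
        ∃ M : Subgroup ↥G, M.Normal ∧ upperCentralSeries ↥M c = ⊤ ∧
          Nat.Coprime (Nat.card M) p ∧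
          M.index ≤ J' * (Nat.card Gp) ^ e' := by
  have := Fact.mk hp
  obtain ⟨B, hB⟩ := hbound
  obtain ⟨J, e, hJ, hJordan⟩ := hpJordan
  have hBpos : 0 < B := (hB ⊥ inferInstance).trans' (by simp)
  refine ⟨(B * J) ^ B, e * B, by positivity, fun G _ Gp => ?_⟩
  set ι := G.subgroupOfInclusion N
  have hι : Function.Injective ι := G.subgroupOfInclusion_injective N
  have : Finite (G.subgroupOf N) := Finite.of_injective _ hι
  obtain ⟨G'p⟩ : Nonempty (Sylow p (G.subgroupOf N)) := inferInstance
  obtain ⟨M, _, hMc, hMp, hMindex⟩ := hJordan _ inferInstance G'p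
  obtain ⟨M', hM'n, hM'c, hM'p, hM'index⟩ :=
    exists_normal_nilpotent_coprime_of_injective hι M hMc hMp
  have hK : ι.range.index ≤ B := by
    rw [Subgroup.range_subgroupOfInclusion, Subgroup.index_subgroupOf_eq_card_map]
    exact hB _ (Finite.Set.finite_image _ _)
  have hSylow := Sylow.card_le_card_of_injective hι G'p Gp
  refine ⟨M', hM'n, hM'c, hM'p, hM'index.trans ?_⟩
  calc (M.index * ι.range.index) ^ ι.range.index
      ≤ (J * Nat.card Gp ^ e * B) ^ B := by
        gcongr
        · have : 0 < Nat.card Gp := Nat.card_pos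
          exact Nat.one_le_iff_ne_zero.mpr (by positivity)
        · exact hMindex.trans (by gcongr)
    _ = (B * J) ^ B * Nat.card Gp ^ (e * B) := by ring
end

section
/- Let n be a positive integer. Then the restriction of the reduction homomorphism GL_n(Z_2) → GL_n(Z/4Z) to any finite subgroup G of GL_n(Z_2) is injective; equivalently, the kernel of the reduction map GL_n(Z_2) → GL_n(Z/4Z) contains no non-trivial elements of finite order. In particular, every finite subgroup of GL_n(Z_2) is isomorphic to a subgroup of GL_n(Z/4Z). -/
open Finset

private lemma padic_sum_norm_le {p : ℕ} [Fact p.Prime] {ι : Type*} (s : Finset ι)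
    (f : ι → ℤ_[p]) (C : ℝ) (hC : 0 ≤ C) (h : ∀ i ∈ s, ‖f i‖ ≤ C) :
    ‖∑ i ∈ s, f i‖ ≤ C := by
  classical
  induction s using Finset.induction_on with
  | empty => simpa using hC
  | @insert a s hx ih =>
    rw [Finset.sum_insert hx]
    refine (PadicInt.nonarchimedean _ _).trans (max_le (h a (by simp)) ?_)
    exact ih fun i hi => h i (Finset.mem_insert_of_mem hi)

private lemma entry_pow_le {n : ℕ} (B : Matrix (Fin n) (Fin n) ℤ_[2]) (c : ℝ)
    (hc0 : 0 ≤ c) (hB : ∀ i j, ‖B i j‖ ≤ c) :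
    ∀ k, 1 ≤ k → ∀ i j, ‖(B ^ k) i j‖ ≤ c ^ k := by
  intro k
  induction k with
  | zero => omega
  | succ k ih =>
    intro _ i j
    rcases Nat.eq_zero_or_pos k with rfl | hk
    · simp only [zero_add, pow_one]
      exact hB i j
    · rw [pow_succ, Matrix.mul_apply]
      refine padic_sum_norm_le _ _ _ (by positivity) fun l _ => ?_
      rw [norm_mul, pow_succ]
      exact mul_le_mul (ih hk i l) (hB l j) (norm_nonneg _) (by positivity)

/-- Core lemma: if all entries of `B` have norm `≤ 1/4` and `(1+B)^q = 1` for a prime `q`,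
then `B = 0`. -/
private lemma key_lemma {n : ℕ} (q : ℕ) (hq : q.Prime) (B : Matrix (Fin n) (Fin n) ℤ_[2])
    (hB : ∀ i j, ‖B i j‖ ≤ (2 : ℝ) ^ (-2 : ℤ)) (h : (1 + B) ^ q = 1) : B = 0 := by
  by_contra hB0
  have hquarter : ((2 : ℝ) ^ (-2 : ℤ)) = (4:ℝ)⁻¹ := by norm_num
  rw [hquarter] at hB
  obtain ⟨i0, j0, hij0⟩ : ∃ i j, B i j ≠ 0 := by
    by_contra hc
    push_neg at hc
    exact hB0 (by ext i j; simpa using hc i j)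
  obtain ⟨⟨i, j⟩, -, hmax⟩ := Finset.exists_max_image (Finset.univ ×ˢ Finset.univ)
    (fun ij : Fin n × Fin n => ‖B ij.1 ij.2‖) ⟨(i0, j0), by simp⟩
  set c : ℝ := ‖B i j‖ with hc
  have hcmax : ∀ a b, ‖B a b‖ ≤ c := fun a b => hmax (a, b) (by simp)
  have hc0 : 0 < c := lt_of_lt_of_le (norm_pos_iff.mpr hij0) (hcmax i0 j0)
  have hc4 : c ≤ (4:ℝ)⁻¹ := hB i j
  have hc1 : c ≤ 1 := hc4.trans (by norm_num)
  -- binomial expansion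
  have hcomm : Commute B (1 : Matrix (Fin n) (Fin n) ℤ_[2]) := Commute.one_right B
  have hexp := hcomm.add_pow q
  rw [add_comm B (1 : Matrix (Fin n) (Fin n) ℤ_[2])] at hexp
  rw [h] at hexp
  simp only [one_pow, mul_one] at hexp
  have hcast : ∀ m : ℕ, B ^ m * (q.choose m : Matrix (Fin n) (Fin n) ℤ_[2])
      = q.choose m • B ^ m := by
    intro m
    rw [nsmul_eq_mul, (Nat.cast_commute (q.choose m) (B ^ m)).eq]
  rw [Finset.sum_congr rfl fun m _ => hcast m] at hexp
  -- split off the first two terms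
  have h2q : 2 ≤ q := hq.two_le
  rw [Finset.range_eq_Ico, Finset.sum_eq_sum_Ico_succ_bot (show 0 < q + 1 by omega),
    Finset.sum_eq_sum_Ico_succ_bot (show 1 < q + 1 by omega)] at hexp
  simp only [pow_zero, Nat.choose_zero_right, one_smul, Nat.choose_one_right, pow_one] at hexp
  have heq : q • B + ∑ k ∈ Finset.Ico 2 (q + 1), q.choose k • B ^ k = 0 :=
    left_eq_add.mp hexp
  -- evaluate at entry (i, j)
  have hentry : q • B i j + ∑ k ∈ Finset.Ico 2 (q + 1), q.choose k • (B ^ k) i j = 0 := by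
    have := congrFun (congrFun heq i) j
    simp only [Matrix.add_apply, Matrix.sum_apply, Matrix.smul_apply, Matrix.zero_apply] at this
    exact this
  have hSle : ‖∑ k ∈ Finset.Ico 2 (q + 1), q.choose k • (B ^ k) i j‖ ≤ c ^ 2 := by
    refine padic_sum_norm_le _ _ _ (by positivity) fun k hk => ?_
    have hk2 : 2 ≤ k := (Finset.mem_Ico.mp hk).1
    rw [nsmul_eq_mul, norm_mul]
    calc ‖(q.choose k : ℤ_[2])‖ * ‖(B ^ k) i j‖
        ≤ 1 * c ^ k := mul_le_mul (PadicInt.norm_le_one _)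
          (entry_pow_le B c hc0.le hcmax k (by omega) i j) (norm_nonneg _) zero_le_one
      _ = c ^ k := one_mul _
      _ ≤ c ^ 2 := pow_le_pow_of_le_one hc0.le hc1 hk2
  have hqnorm : (2 : ℝ)⁻¹ ≤ ‖(q : ℤ_[2])‖ := by
    rcases hq.eq_two_or_odd' with rfl | hodd
    · rw [show ((2 : ℕ) : ℤ_[2]) = ((2 : ℕ) : ℤ_[2]) from rfl, PadicInt.norm_p (p := 2)]
      norm_num
    · have h2 : ¬ (2 ∣ q) := by
        have := Nat.odd_iff.mp hodd
        omega
      have h1 : ¬ (‖((q : ℤ) : ℤ_[2])‖ < 1) := by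
        rw [PadicInt.norm_int_lt_one_iff_dvd]
        exact_mod_cast h2
      push_neg at h1
      rw [Int.cast_natCast] at h1
      linarith [h1]
  have hlhs : (2 : ℝ)⁻¹ * c ≤ ‖q • B i j‖ := by
    rw [nsmul_eq_mul, norm_mul]
    exact mul_le_mul_of_nonneg_right hqnorm (norm_nonneg _)
  have hfinal : ‖q • B i j‖ = ‖∑ k ∈ Finset.Ico 2 (q + 1), q.choose k • (B ^ k) i j‖ := by
    rw [eq_neg_of_add_eq_zero_left hentry, norm_neg]
  nlinarith [hfinal, hSle, hlhs, hc0, hc4]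

private lemma phi_ker_norm (a : ℤ_[2])
    (ha : ((ZMod.castHom (by norm_num : (4 : ℕ) ∣ 2 ^ 2) (ZMod 4)).comp
      (PadicInt.toZModPow (p := 2) 2)) a = 0) : ‖a‖ ≤ (2 : ℝ) ^ (-2 : ℤ) := by
  have h0 : PadicInt.toZModPow (p := 2) 2 a = 0 := by
    have := ha
    rw [RingHom.comp_apply] at this
    have hid : (ZMod.castHom (by norm_num : (4 : ℕ) ∣ 2 ^ 2) (ZMod 4))
        (PadicInt.toZModPow (p := 2) 2 a) = PadicInt.toZModPow (p := 2) 2 a := by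
      rw [ZMod.castHom_apply]
      exact ZMod.cast_id _ _
    rwa [hid] at this
  have hmem : a ∈ Ideal.span {((2 : ℕ) : ℤ_[2]) ^ 2} := by
    rw [← PadicInt.ker_toZModPow 2]
    exact h0
  exact (PadicInt.norm_le_pow_iff_mem_span_pow a 2).mpr hmem

private lemma ker_torsion_free {n : ℕ} (x : GL (Fin n) ℤ_[2]) (hfin : IsOfFinOrder x)
    (hx : Matrix.GeneralLinearGroup.map (n := Fin n)
      ((ZMod.castHom (by norm_num : (4 : ℕ) ∣ 2 ^ 2) (ZMod 4)).comp
        (PadicInt.toZModPow (p := 2) 2)) x = 1) : x = 1 := by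
  by_contra hx1
  set φ := ((ZMod.castHom (by norm_num : (4 : ℕ) ∣ 2 ^ 2) (ZMod 4)).comp
    (PadicInt.toZModPow (p := 2) 2)) with hφ
  set N := orderOf x with hN
  have hN0 : 0 < N := hfin.orderOf_pos
  have hN1 : N ≠ 1 := fun h => hx1 (orderOf_eq_one_iff.mp h)
  set q := N.minFac with hqdef
  have hq : q.Prime := Nat.minFac_prime hN1
  set k := N / q with hk
  have hkq : k * q = N := Nat.div_mul_cancel (Nat.minFac_dvd N)
  have hkpos : 0 < k := Nat.div_pos (Nat.minFac_le hN0) hq.pos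
  have hklt : k < N := Nat.div_lt_self hN0 hq.one_lt
  set y := x ^ k with hy
  have hyq : y ^ q = 1 := by rw [hy, ← pow_mul, hkq, pow_orderOf_eq_one]
  have hy1 : y ≠ 1 := by
    intro h
    have : N ∣ k := orderOf_dvd_of_pow_eq_one h
    exact absurd (Nat.le_of_dvd hkpos this) (not_le.mpr hklt)
  have hyred : Matrix.GeneralLinearGroup.map (n := Fin n) φ y = 1 := by
    rw [hy, map_pow, hx, one_pow]
  -- extract entry information
  have hval : (y.1).map φ = (1 : Matrix (Fin n) (Fin n) (ZMod 4)) := by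
    have := congrArg Units.val hyred
    simpa [Matrix.GeneralLinearGroup.map] using this
  set B := y.1 - 1 with hB
  have hBnorm : ∀ i j, ‖B i j‖ ≤ (2 : ℝ) ^ (-2 : ℤ) := by
    intro i j
    apply phi_ker_norm
    have h1 : φ (y.1 i j) = (1 : Matrix (Fin n) (Fin n) (ZMod 4)) i j := by
      have := congrFun (congrFun hval i) j
      simpa [Matrix.map_apply] using this
    have h2 : φ ((1 : Matrix (Fin n) (Fin n) ℤ_[2]) i j)
        = (1 : Matrix (Fin n) (Fin n) (ZMod 4)) i j := by
      rcases eq_or_ne i j with rfl | hij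
      · simp [Matrix.one_apply_eq]
      · simp [Matrix.one_apply_ne hij]
    show φ (B i j) = 0
    rw [hB, Matrix.sub_apply, map_sub, h1, h2, sub_self]
  have hpow : (1 + B) ^ q = 1 := by
    have h1B : 1 + B = y.1 := by rw [hB, add_sub_cancel]
    rw [h1B, ← Units.val_pow_eq_pow_val, hyq, Units.val_one]
  have hB0 : B = 0 := key_lemma q hq B hBnorm hpow
  have : y.1 = 1 := by
    have h := hB0
    rw [hB, sub_eq_zero] at h
    exact h
  exact hy1 (Units.ext this)

/-- The reduction map `GL_n(ℤ_2) → GL_n(ℤ/4ℤ)` is injective on every finite subgroup;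
equivalently, its kernel contains no non-trivial elements of finite order. In particular,
every finite subgroup of `GL_n(ℤ_2)` is isomorphic to a subgroup of `GL_n(ℤ/4ℤ)`. -/
theorem GL_dyadic_reduction_mod_four_injective_on_finite (n : ℕ) (hn : 0 < n) :
    (∀ G : Subgroup (GL (Fin n) ℤ_[2]), Finite G →
      Function.Injective fun g : G =>
        Matrix.GeneralLinearGroup.map (n := Fin n)
          ((ZMod.castHom (by norm_num : (4 : ℕ) ∣ 2 ^ 2) (ZMod 4)).comp
            (PadicInt.toZModPow (p := 2) 2)) g.1) ∧
    (∀ x : GL (Fin n) ℤ_[2], IsOfFinOrder x →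
      Matrix.GeneralLinearGroup.map (n := Fin n)
          ((ZMod.castHom (by norm_num : (4 : ℕ) ∣ 2 ^ 2) (ZMod 4)).comp
            (PadicInt.toZModPow (p := 2) 2)) x = 1 → x = 1) ∧
    (∀ G : Subgroup (GL (Fin n) ℤ_[2]), Finite G →
      ∃ H : Subgroup (GL (Fin n) (ZMod 4)), Nonempty (↥G ≃* ↥H)) := by
  have inj : ∀ G : Subgroup (GL (Fin n) ℤ_[2]), Finite G →
      Function.Injective fun g : G =>
        Matrix.GeneralLinearGroup.map (n := Fin n)
          ((ZMod.castHom (by norm_num : (4 : ℕ) ∣ 2 ^ 2) (ZMod 4)).comp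
            (PadicInt.toZModPow (p := 2) 2)) g.1 := by
    intro G hG g h hgh
    simp only at hgh
    set F := Matrix.GeneralLinearGroup.map (n := Fin n)
      ((ZMod.castHom (by norm_num : (4 : ℕ) ∣ 2 ^ 2) (ZMod 4)).comp
        (PadicInt.toZModPow (p := 2) 2)) with hF
    have hz : F (g.1 * h.1⁻¹) = 1 := by
      rw [F.map_mul, F.map_inv, hgh, mul_inv_cancel]
    set z : G := g * h⁻¹ with hzdef
    have hzfin : IsOfFinOrder (z : GL (Fin n) ℤ_[2]) := by
      have hzf : IsOfFinOrder z := isOfFinOrder_of_finite z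
      obtain ⟨m, hm, hm1⟩ := isOfFinOrder_iff_pow_eq_one.mp hzf
      refine isOfFinOrder_iff_pow_eq_one.mpr ⟨m, hm, ?_⟩
      have : ((z ^ m : G) : GL (Fin n) ℤ_[2]) = 1 := by rw [hm1]; rfl
      rwa [SubgroupClass.coe_pow] at this
    have hz1 : (z : GL (Fin n) ℤ_[2]) = 1 := ker_torsion_free _ hzfin hz
    have : g.1 = h.1 := by
      have : g.1 * h.1⁻¹ = 1 := hz1
      rw [mul_inv_eq_one] at this
      exact this
    exact Subtype.ext this
  refine ⟨inj, fun x hfin hx => ker_torsion_free x hfin hx, ?_⟩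
  intro G hG
  let F : G →* GL (Fin n) (ZMod 4) :=
    (Matrix.GeneralLinearGroup.map (n := Fin n)
      ((ZMod.castHom (by norm_num : (4 : ℕ) ∣ 2 ^ 2) (ZMod 4)).comp
        (PadicInt.toZModPow (p := 2) 2))).comp G.subtype
  have hFinj : Function.Injective F := inj G hG
  exact ⟨F.range, ⟨MonoidHom.ofInjective hFinj⟩⟩
end

section
/- Let Λ be a finitely generated abelian group. Then the automorphism group Aut(Λ) has bounded finite subgroups; that is, there exists a constant B, depending only on Λ, such that every finite subgroup of Aut(Λ) has order at most B. -/
/-!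
Let `T` be the torsion subgroup of `Λ`, which is finite, say `c • T = 0` with `c ≠ 0`, and let
`N = 3c Λ`. Reduction modulo `N` maps `Aut Λ` to the finite group `Aut (Λ ⧸ N)`, and its kernel
has no nontrivial element of finite order, so every finite subgroup of `Aut Λ` embeds into
`Aut (Λ ⧸ N)`.

An automorphism `φ ≡ 1 mod 3c` of finite order acts on the free module `Λ ⧸ T` by an
endomorphism `1 + 3X` of finite order. Minkowski's argument shows that such an element is `1`:
if `(1 + 3X) ^ q = 1` for a prime `q`, the binomial expansion shows that `X` is divisible by
every power of `3`, hence `X = 0` by Krull's intersection theorem. Thus `φ x - x` is torsion;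
writing it as `3c y` forces `y` to be torsion too, so `φ x - x = 3 (c y) = 0`.
-/

theorem exists_one_add_pow_eq {R : Type*} [Ring R] (y : R) (n : ℕ) :
    ∃ z, (1 + y) ^ n = 1 + n • y + y ^ 2 * z := by
  induction n with
  | zero => exact ⟨0, by simp⟩
  | succ n ih =>
    obtain ⟨z, hz⟩ := ih
    refine ⟨n • 1 + z + z * y, ?_⟩
    rw [pow_succ, hz]
    simp only [add_mul, mul_add, one_mul, mul_one, pow_two, mul_assoc, succ_nsmul,
      smul_mul_assoc, mul_smul_comm]
    abel

def congruenceSubmonoid (R : Type*) [Ring R] (n : ℤ) : Submonoid R where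
  carrier := {a | ∃ x, a = 1 + n • x}
  one_mem' := ⟨0, by simp⟩
  mul_mem' := by
    rintro _ _ ⟨x, rfl⟩ ⟨y, rfl⟩
    refine ⟨x + y + n • (x * y), ?_⟩
    simp only [add_mul, mul_add, one_mul, mul_one, smul_mul_assoc, mul_smul_comm, smul_add,
      smul_smul]
    abel

theorem eq_zero_of_forall_exists_eq_pow_smul {R M : Type*} [CommRing R] [IsDomain R]
    [IsNoetherianRing R] [AddCommGroup M] [Module R M] [Module.Finite R M]
    [Module.IsTorsionFree R M] {r : R} (hr : ¬IsUnit r) {x : M}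
    (h : ∀ s : ℕ, ∃ y, x = r ^ s • y) : x = 0 := by
  have hI : Ideal.span {r} ≠ ⊤ := by rwa [Ne, Ideal.span_singleton_eq_top]
  rw [← Submodule.mem_bot R, ← (Ideal.span {r}).iInf_pow_smul_eq_bot_of_isTorsionFree hI,
    Submodule.mem_iInf]
  intro s
  obtain ⟨y, rfl⟩ := h s
  rw [Ideal.span_singleton_pow, Submodule.ideal_span_singleton_smul]
  exact Submodule.smul_mem_pointwise_smul _ _ _ Submodule.mem_top

theorem Submonoid.eq_one_of_isOfFinOrder {M : Type*} [Monoid M] (S : Submonoid M)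
    (hS : ∀ a ∈ S, ∀ p : ℕ, p.Prime → a ^ p = 1 → a = 1) {a : M} (ha : a ∈ S)
    (hfin : IsOfFinOrder a) : a = 1 := by
  by_contra hne
  have hp : (orderOf a).minFac.Prime := Nat.minFac_prime (orderOf_eq_one_iff.not.mpr hne)
  have hord := orderOf_pow_orderOf_div hfin.orderOf_pos.ne' (Nat.minFac_dvd (orderOf a))
  have := hS _ (S.pow_mem ha _) _ hp (hord ▸ pow_orderOf_eq_one _)
  rw [this, orderOf_one] at hord
  exact hp.one_lt.ne hord

section Minkowski

variable {R : Type*} [Ring R] [Module.IsTorsionFree ℤ R]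

theorem exists_eq_three_zsmul_of_one_add_pow_prime_eq_one {q : ℕ} (hq : q.Prime) {u : ℤ}
    (hu : u ≠ 0) {x : R} (h : (1 + (3 * u) • x) ^ q = 1) : ∃ y, x = (3 : ℤ) • y := by
  rcases eq_or_ne q 3 with rfl | hq3
  · -- The linear term `3 x` alone says nothing; every term is divisible by `3 (3u)`.
    have cube : ∀ y : R, (1 + y) ^ 3 = 1 + (3 : ℤ) • y + (3 : ℤ) • y ^ 2 + y ^ 3 := fun y => by
      noncomm_ring
    have e := cube ((3 * u) • x)
    rw [smul_pow, smul_pow, h] at e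
    have key : ((3 : ℤ) * (3 * u)) • (x + (3 : ℤ) • (u • x ^ 2 + u ^ 2 • x ^ 3)) = 0 := by
      linear_combination (norm := module) -e
    refine ⟨-(u • x ^ 2 + u ^ 2 • x ^ 3), ?_⟩
    linear_combination (norm := module) (smul_eq_zero_iff_right (by positivity)).mp key
  · obtain ⟨z, hz⟩ := exists_one_add_pow_eq ((3 * u) • x) q
    rw [h, smul_pow, smul_mul_assoc] at hz
    have key : (3 * u) • ((q : ℤ) • x + (3 * u) • (x ^ 2 * z)) = 0 := by
      linear_combination (norm := module) -hz
    have hqx := (smul_eq_zero_iff_right (by positivity)).mp key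
    obtain ⟨a, b, hab⟩ :=
      Nat.isCoprime_iff_coprime.mpr ((Nat.coprime_primes hq Nat.prime_three).mpr hq3)
    refine ⟨b • x - (a * u) • (x ^ 2 * z), ?_⟩
    linear_combination (norm := module) a • hqx - hab • x

variable [Module.Finite ℤ R]

theorem eq_zero_of_one_add_three_zsmul_pow_prime_eq_one {q : ℕ} (hq : q.Prime) {x : R}
    (h : (1 + (3 : ℤ) • x) ^ q = 1) : x = 0 := by
  refine eq_zero_of_forall_exists_eq_pow_smul (r := (3 : ℤ)) (by norm_num [Int.isUnit_iff])
    fun s => ?_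
  induction s with
  | zero => exact ⟨x, (one_smul ℤ x).symm⟩
  | succ s ih =>
    obtain ⟨y, rfl⟩ := ih
    rw [smul_smul, ← pow_succ'] at h
    obtain ⟨z, rfl⟩ := exists_eq_three_zsmul_of_one_add_pow_prime_eq_one hq
      (pow_ne_zero s three_ne_zero) (by rwa [← pow_succ'])
    exact ⟨z, by rw [smul_smul, ← pow_succ]⟩

theorem IsOfFinOrder.eq_one_of_mem_congruenceSubmonoid_three {a : R}
    (hfin : IsOfFinOrder a) (ha : a ∈ congruenceSubmonoid R 3) : a = 1 := by
  refine (congruenceSubmonoid R 3).eq_one_of_isOfFinOrder ?_ ha hfin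
  rintro _ ⟨x, rfl⟩ p hp h
  rw [eq_zero_of_one_add_three_zsmul_pow_prime_eq_one hp h, smul_zero, add_zero]

end Minkowski

theorem Module.End.mem_congruenceSubmonoid {M : Type*} [AddCommGroup M] [Module.Free ℤ M]
    {f : Module.End ℤ M} {n : ℤ} (h : ∀ x, ∃ y, f x - x = n • y) :
    f ∈ congruenceSubmonoid (Module.End ℤ M) n := by
  let b := Module.Free.chooseBasis ℤ M
  choose y hy using fun i => h (b i)
  refine ⟨b.constr ℤ y, b.ext fun i => ?_⟩
  rw [LinearMap.add_apply, LinearMap.smul_apply, Module.End.one_apply, Basis.constr_basis,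
    ← hy, add_sub_cancel]

namespace AddAut

section Quotient

variable {A : Type*} [AddGroup A] (H : AddSubgroup A) [H.Characteristic]

def quotient : AddAut A →+ AddAut (A ⧸ H) where
  toFun φ := QuotientAddGroup.congr H H φ (AddSubgroup.characteristic_iff_map_eq.mp ‹_› φ)
  map_zero' := by ext ⟨x⟩; rfl
  map_add' _ _ := by ext ⟨x⟩; rfl

@[simp]
theorem quotient_apply_mk (φ : AddAut A) (x : A) : quotient H φ x = ((φ x : A) : A ⧸ H) :=
  rfl

theorem quotient_eq_zero_iff {φ : AddAut A} : quotient H φ = 0 ↔ ∀ x, φ x - x ∈ H := by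
  refine ⟨fun h x => ?_, fun h => ?_⟩
  · rw [← QuotientAddGroup.eq_iff_sub_mem, ← quotient_apply_mk, h, zero_apply]
  · ext ⟨x⟩
    exact QuotientAddGroup.eq_iff_sub_mem.mpr (h x)

end Quotient

variable {A : Type*} [AddCommGroup A]

def toIntEnd : AddAut A →+ Additive (Module.End ℤ A) where
  toFun φ := Additive.ofMul φ.toIntLinearEquiv.toLinearMap
  map_zero' := rfl
  map_add' _ _ := rfl

@[simp]
theorem toIntEnd_apply (φ : AddAut A) (x : A) : Additive.toMul (toIntEnd φ) x = φ x :=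
  rfl

instance : (AddCommGroup.torsion A).Characteristic :=
  AddSubgroup.characteristic_iff_le_comap.mpr fun φ =>
    AddCommGroup.le_comap_torsion φ.toAddMonoidHom

instance (n : ℕ) : (nsmulAddMonoidHom (α := A) n).range.Characteristic :=
  AddSubgroup.characteristic_iff_le_comap.mpr fun φ => by
    rintro _ ⟨y, rfl⟩
    exact ⟨φ y, (map_nsmul φ n y).symm⟩

theorem eq_zero_of_isOfFinAddOrder_of_isAddTorsionFree [AddGroup.FG A] [IsAddTorsionFree A]
    {φ : AddAut A} (hφ : IsOfFinAddOrder φ) (h : ∀ x, ∃ y, φ x - x = 3 • y) : φ = 0 := by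
  have hcong : Additive.toMul (toIntEnd φ) ∈ congruenceSubmonoid (Module.End ℤ A) 3 :=
    Module.End.mem_congruenceSubmonoid fun x => by
      obtain ⟨y, hy⟩ := h x
      exact ⟨y, by rw [toIntEnd_apply, hy, ← natCast_zsmul]; rfl⟩
  have hfin : IsOfFinOrder (Additive.toMul (toIntEnd φ)) :=
    isOfFinAddOrder_ofMul_iff.mp (toIntEnd.isOfFinAddOrder hφ)
  have := hfin.eq_one_of_mem_congruenceSubmonoid_three hcong
  ext x
  exact LinearMap.congr_fun this x

theorem eq_zero_of_isOfFinAddOrder [AddGroup.FG A] {c : ℕ}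
    (hc : ∀ t ∈ AddCommGroup.torsion A, c • t = 0) {φ : AddAut A} (hφ : IsOfFinAddOrder φ)
    (h : ∀ x, ∃ y, φ x - x = (3 * c) • y) : φ = 0 := by
  set T := AddCommGroup.torsion A
  have hquot : quotient T φ = 0 := by
    refine eq_zero_of_isOfFinAddOrder_of_isAddTorsionFree ((quotient T).isOfFinAddOrder hφ) ?_
    intro x
    obtain ⟨x, rfl⟩ := QuotientAddGroup.mk_surjective x
    obtain ⟨y, hy⟩ := h x
    refine ⟨((c • y : A) : A ⧸ T), ?_⟩
    rw [quotient_apply_mk, ← QuotientAddGroup.mk_sub, hy, ← QuotientAddGroup.mk_nsmul, mul_nsmul']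
  refine AddEquiv.ext fun x => ?_
  obtain ⟨y, hy⟩ := h x
  rcases eq_or_ne c 0 with rfl | hc0
  · simpa [sub_eq_zero] using hy
  have hyT : y ∈ T := by
    have hxT := (quotient_eq_zero_iff T).mp hquot x
    rw [hy, AddCommGroup.mem_torsion] at hxT
    exact hxT.of_nsmul (by positivity)
  rw [zero_apply, ← sub_eq_zero, hy, mul_nsmul', hc y hyT, nsmul_zero]

end AddAut

theorem AddCommGroup.exists_nsmul_eq_zero_of_mem_torsion (A : Type*) [AddCommGroup A]
    [AddGroup.FG A] : ∃ c ≠ 0, ∀ t ∈ torsion A, c • t = 0 := by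
  have : AddGroup.FG (torsion A) := by
    rw [AddGroup.fg_iff_addSubgroup_fg, ← AddSubgroup.toIntSubmodule_toAddSubgroup (torsion A),
      ← Submodule.fg_iff_addSubgroup_fg]
    exact IsNoetherian.noetherian _
  have := finite_of_fg_isAddTorsion _ fun t : torsion A => AddSubmonoid.isOfFinAddOrder_coe.mp t.2
  exact ⟨Nat.card (torsion A), Nat.card_pos.ne', fun t ht =>
    congrArg Subtype.val (card_nsmul_eq_zero' (x := (⟨t, ht⟩ : torsion A)))⟩

/-- The automorphism group of a finitely generated abelian group has bounded finite
subgroups. -/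
theorem aut_fg_abelian_bounded_finite_subgroups
    (Λ : Type*) [AddCommGroup Λ] [AddGroup.FG Λ] :
    ∃ B : ℕ, ∀ G : AddSubgroup (AddAut Λ), Finite G → Nat.card G ≤ B := by
  obtain ⟨c, hc0, hc⟩ := AddCommGroup.exists_nsmul_eq_zero_of_mem_torsion Λ
  let N := (nsmulAddMonoidHom (α := Λ) (3 * c)).range
  have := AddSubgroup.finiteIndex_range_nsmulAddMonoidHom_of_fg Λ (n := 3 * c) (by positivity)
  refine ⟨Nat.card (AddAut (Λ ⧸ N)), fun G _ => Nat.card_le_card_of_injective _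
    ((injective_iff_map_eq_zero ((AddAut.quotient N).comp G.subtype)).mpr fun φ hφ => ?_)⟩
  refine Subtype.ext (AddAut.eq_zero_of_isOfFinAddOrder hc
    (G.subtype.isOfFinAddOrder (isOfFinAddOrder_of_finite φ)) fun x => ?_)
  obtain ⟨y, hy⟩ := (AddAut.quotient_eq_zero_iff N).mp hφ x
  exact ⟨y, hy.symm⟩
end

section
/- For every positive integer n, the group GL_n(Q) of invertible n×n matrices with rational entries has bounded finite subgroups; that is, there exists a constant B = B(n) such that every finite subgroup of GL_n(Q) has order at most B. -/
/-!
A finite group `G` of rational matrices preserves the `ℤ`-lattice spanned by the `G`-orbit of a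
basis, so it embeds into `GL_n(ℤ)`. Reduction modulo an odd prime `p` is injective on
finite subgroups of `GL_n(ℤ)` (Minkowski): if `A = 1 + p^k N` and `A^q = 1` for a prime `q`, the
binomial expansion of `(1 + p^k N)^q` forces `p ∣ N`, so `A - 1` is divisible by every power of `p`.
Hence `|G| ≤ |M_n(𝔽₃)| = 3^(n²)`.
-/

open Module

section Minkowski

open Finset

theorem one_add_pow_eq_one_add_nsmul_add_sum {R : Type*} [Semiring R] (x : R) (q : ℕ) :
    (1 + x) ^ q = 1 + q • x + ∑ m ∈ range (q - 1), q.choose (m + 2) • x ^ (m + 2) := by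
  rcases q with _ | q
  · simp
  rw [add_comm 1 x, (Commute.one_right x).add_pow, sum_range_succ', sum_range_succ']
  simp only [one_pow, mul_one, ← nsmul_eq_mul', pow_zero, zero_add, pow_one,
    Nat.choose_zero_right, Nat.choose_one_right, one_smul, add_tsub_cancel_right]
  abel

theorem Nat.pow_succ_dvd_choose_mul_pow (p q : ℕ) {k j : ℕ} (hk : k ≠ 0) (hj : 2 ≤ j) :
    p ^ (k + 1) ∣ q.choose j * p ^ (k * j) :=
  Dvd.dvd.mul_left (Nat.pow_dvd_pow p (by nlinarith [Nat.one_le_iff_ne_zero.2 hk])) _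

theorem Nat.Prime.pow_add_two_dvd_choose_mul_pow {p k j : ℕ} (hp : p.Prime) (hp2 : p ≠ 2)
    (hk : k ≠ 0) (hj : 2 ≤ j) (hjp : j ≤ p) : p ^ (k + 2) ∣ p.choose j * p ^ (k * j) := by
  have hk1 := Nat.one_le_iff_ne_zero.2 hk
  rcases hjp.lt_or_eq with hjp | rfl
  · rw [pow_succ']
    exact mul_dvd_mul (hp.dvd_choose_self (by omega) hjp) (Nat.pow_dvd_pow p (by nlinarith))
  · have hp3 : 3 ≤ j := by have := hp.two_le; omega
    exact Dvd.dvd.mul_left (Nat.pow_dvd_pow j (by nlinarith)) _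

theorem Finset.exists_sum_nsmul_eq_nsmul_of_dvd {ι M : Type*} [AddCommMonoid M] {s : Finset ι}
    {c : ι → ℕ} {d : ℕ} (v : ι → M) (h : ∀ i ∈ s, d ∣ c i) :
    ∃ w, ∑ i ∈ s, c i • v i = d • w :=
  ⟨∑ i ∈ s, (c i / d) • v i, by
    rw [smul_sum]
    exact sum_congr rfl fun i hi => by rw [← mul_smul, Nat.mul_div_cancel' (h i hi)]⟩

/- In `q p^k y = -∑ C(q, j) p^(kj) y^j` (sum over `2 ≤ j ≤ q`) the right-hand side is divisible
by `p^(k+1)`, and even by `p^(k+2)` when `q = p`. -/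
theorem exists_eq_nsmul_of_one_add_pow_nsmul_pow_eq_one {R : Type*} [Ring R] [IsAddTorsionFree R]
    {p q k : ℕ} (hp : p.Prime) (hp2 : p ≠ 2) (hq : q.Prime) (hk : k ≠ 0) {y : R}
    (h : (1 + p ^ k • y) ^ q = 1) : ∃ z, y = p • z := by
  have hexp : q • p ^ k • y +
      ∑ m ∈ range (q - 1), (q.choose (m + 2) * p ^ (k * (m + 2))) • y ^ (m + 2) = 0 := by
    rw [one_add_pow_eq_one_add_nsmul_add_sum, add_assoc, add_eq_left] at h
    simpa only [smul_pow, ← pow_mul, mul_smul] using h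
  have hinj := fun e => nsmul_right_injective (M := R) (pow_ne_zero e hp.ne_zero)
  by_cases hqp : q = p
  · subst hqp
    obtain ⟨w, hw⟩ := exists_sum_nsmul_eq_nsmul_of_dvd (s := range (q - 1)) (d := q ^ (k + 2))
      (fun m => y ^ (m + 2)) fun m hm =>
        hp.pow_add_two_dvd_choose_mul_pow (j := m + 2) hp2 hk (by omega)
          (by rw [mem_range] at hm; omega)
    refine ⟨-w, hinj (k + 1) ?_⟩
    beta_reduce
    rw [hw, ← mul_smul, ← pow_succ'] at hexp
    rw [← mul_smul, ← pow_succ, smul_neg, eq_neg_iff_add_eq_zero, ← hexp]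
  · obtain ⟨w, hw⟩ := exists_sum_nsmul_eq_nsmul_of_dvd (s := range (q - 1)) (d := p ^ (k + 1))
      (fun m => y ^ (m + 2)) fun m _ => Nat.pow_succ_dvd_choose_mul_pow p q (j := m + 2) hk
        (by omega)
    have hqy : q • y = p • -w := by
      refine hinj k ?_
      beta_reduce
      rw [hw, pow_succ, mul_smul, smul_comm q] at hexp
      rw [smul_neg, smul_neg, eq_neg_iff_add_eq_zero, hexp]
    obtain ⟨a, b, hab⟩ := (Nat.coprime_primes hq hp).2 hqp |>.isCoprime
    refine ⟨a • -w + b • y, ?_⟩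
    calc y = (a * q + b * p : ℤ) • y := by rw [hab, one_smul]
      _ = p • (a • -w + b • y) := by
        rw [add_smul, mul_smul, mul_smul, natCast_zsmul, natCast_zsmul, hqy, smul_add,
          smul_comm a p, smul_comm b p]

end Minkowski

namespace Matrix

variable {m n ι : Type*}

instance {α : Type*} [AddMonoid α] [IsAddTorsionFree α] : IsAddTorsionFree (Matrix m n α) :=
  inferInstanceAs (IsAddTorsionFree (m → n → α))

theorem exists_eq_nsmul_of_map_zmod_eq_zero {d : ℕ} {M : Matrix m n ℤ}
    (h : M.map (Int.castRingHom (ZMod d)) = 0) : ∃ N, M = d • N := by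
  have hdvd (i : m) (j : n) : (d : ℤ) ∣ M i j :=
    (ZMod.intCast_zmod_eq_zero_iff_dvd _ d).1 (congrFun₂ h i j)
  exact ⟨of fun i j => (hdvd i j).choose, ext fun i j => by simpa using (hdvd i j).choose_spec⟩

theorem eq_zero_of_forall_exists_eq_pow_nsmul {p : ℕ} (hp : p ≠ 1) {M : Matrix m n ℤ}
    (h : ∀ k, ∃ N, M = p ^ k • N) : M = 0 := by
  ext i j
  by_contra hM
  refine FiniteMultiplicity.not_iff_forall.2 (fun k => ?_)
    ((Int.finiteMultiplicity_iff (a := p)).2 ⟨by simpa using hp, hM⟩)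
  obtain ⟨N, hN⟩ := h k
  exact ⟨N i j, by simp [hN]⟩

variable [Fintype ι] [DecidableEq ι]

theorem eq_one_of_pow_prime_eq_one {p q : ℕ} (hp : p.Prime) (hp2 : p ≠ 2) (hq : q.Prime)
    {A : Matrix ι ι ℤ} (hA : (Int.castRingHom (ZMod p)).mapMatrix A = 1) (hAq : A ^ q = 1) :
    A = 1 := by
  have hlevel (k : ℕ) (hk : 1 ≤ k) : ∃ N, A = 1 + p ^ k • N := by
    induction k, hk using Nat.le_induction with
    | base =>
      obtain ⟨N, hN⟩ := exists_eq_nsmul_of_map_zmod_eq_zero (d := p) (M := A - 1)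
        (by rw [← RingHom.mapMatrix_apply, map_sub, hA, map_one, sub_self])
      exact ⟨N, by rw [pow_one, ← hN, add_sub_cancel]⟩
    | succ k hk ih =>
      obtain ⟨N, rfl⟩ := ih
      obtain ⟨z, rfl⟩ :=
        exists_eq_nsmul_of_one_add_pow_nsmul_pow_eq_one hp hp2 hq (by omega) hAq
      exact ⟨z, by rw [smul_smul, ← pow_succ]⟩
  rw [← sub_eq_zero]
  refine eq_zero_of_forall_exists_eq_pow_nsmul hp.ne_one fun k => ?_
  obtain ⟨N, hN⟩ := hlevel (k + 1) (by omega)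
  exact ⟨p • N, by rw [hN, add_sub_cancel_left, pow_succ, mul_smul]⟩

theorem eq_one_of_pow_eq_one {p m : ℕ} (hp : p.Prime) (hp2 : p ≠ 2) (hm : m ≠ 0)
    {A : Matrix ι ι ℤ} (hA : (Int.castRingHom (ZMod p)).mapMatrix A = 1) (hAm : A ^ m = 1) :
    A = 1 := by
  have hfin : IsOfFinOrder A := isOfFinOrder_iff_pow_eq_one.2 ⟨m, Nat.pos_of_ne_zero hm, hAm⟩
  rw [← orderOf_eq_one_iff]
  by_contra hA1
  set q := (orderOf A).minFac
  have hq : q.Prime := Nat.minFac_prime hA1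
  have hB : orderOf (A ^ (orderOf A / q)) = q :=
    orderOf_pow_orderOf_div hfin.orderOf_pos.ne' (Nat.minFac_dvd _)
  have hB1 : A ^ (orderOf A / q) = 1 := by
    refine eq_one_of_pow_prime_eq_one hp hp2 hq (by rw [map_pow, hA, one_pow]) ?_
    simpa only [hB] using pow_orderOf_eq_one (A ^ (orderOf A / q))
  rw [hB1, orderOf_one] at hB
  exact hq.one_lt.ne hB

theorem injective_mapMatrix_comp {G : Type*} [Group G] [Finite G] {p : ℕ} (hp : p.Prime)
    (hp2 : p ≠ 2) {σ : G →* Matrix ι ι ℤ} (hσ : Function.Injective σ) :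
    Function.Injective ((Int.castRingHom (ZMod p)).mapMatrix.toMonoidHom.comp σ) := by
  refine (injective_iff_map_eq_one _).2 fun g hg => hσ ?_
  rw [map_one]
  exact eq_one_of_pow_eq_one hp hp2 Nat.card_pos.ne' hg
    (by rw [← map_pow, pow_card_eq_one', map_one])

end Matrix

namespace Representation

open Submodule Set

variable {K G V : Type*} [Field K] [Monoid G] [AddCommGroup V] [Module K V]
  (R : Type*) [CommRing R] [Module R V] (ρ : Representation K G V) {ι : Type*} (b : ι → V)

def orbitLattice : Submodule R V := span R (range fun x : G × ι => ρ x.1 (b x.2))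

variable {R ρ b}

theorem span_orbitLattice (hb : span K (range b) = ⊤) :
    span K (ρ.orbitLattice R b : Set V) = ⊤ := by
  refine eq_top_iff.2 (hb ▸ span_mono ?_)
  rintro _ ⟨i, rfl⟩
  exact subset_span ⟨(1, i), by simp⟩

variable [Algebra R K] [IsScalarTower R K V]

theorem mapsTo_orbitLattice (g : G) :
    MapsTo ((ρ g).restrictScalars R) (ρ.orbitLattice R b) (ρ.orbitLattice R b) := by
  change ρ.orbitLattice R b ≤ (ρ.orbitLattice R b).comap ((ρ g).restrictScalars R)
  refine span_le.2 ?_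
  rintro _ ⟨⟨h, i⟩, rfl⟩
  exact subset_span ⟨(g * h, i), by simp⟩

theorem isLattice_orbitLattice [Finite G] [Finite ι] (hb : span K (range b) = ⊤) :
    (ρ.orbitLattice R b).IsLattice K :=
  ⟨fg_span (finite_range _), span_orbitLattice hb⟩

variable (R ρ b) in
def restrictOrbitLattice : G →* Module.End R (ρ.orbitLattice R b) where
  toFun g := ((ρ g).restrictScalars R).restrict (mapsTo_orbitLattice g)
  map_one' := by ext; simp
  map_mul' g h := by ext; simp only [map_mul]; rfl

theorem injective_restrictOrbitLattice (hρ : Function.Injective ρ)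
    (hb : span K (range b) = ⊤) : Function.Injective (ρ.restrictOrbitLattice R b) := by
  intro g h hgh
  refine hρ (LinearMap.ext_on (span_orbitLattice (R := R) (ρ := ρ) hb) fun v hv => ?_)
  exact congrArg Subtype.val (LinearMap.congr_fun hgh ⟨v, hv⟩)

variable [IsDomain R] [IsPrincipalIdealRing R] [IsFractionRing R K]

variable (R) in
theorem exists_injective_monoidHom_matrix [Finite G] [FiniteDimensional K V]
    (hρ : Function.Injective ρ) :
    ∃ σ : G →* Matrix (Fin (finrank K V)) (Fin (finrank K V)) R, Function.Injective σ := by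
  let b := Module.finBasis K V
  have hb : span K (range b) = ⊤ := b.span_eq
  have := isLattice_orbitLattice (R := R) (ρ := ρ) hb
  have hrank : finrank R (ρ.orbitLattice R b) = finrank K V :=
    finrank_eq_of_rank_eq ((IsLattice.rank' K _).trans (finrank_eq_rank K V).symm)
  let bL := Module.finBasisOfFinrankEq R _ hrank
  exact ⟨(LinearMap.toMatrixAlgEquiv bL).toMonoidHom.comp (ρ.restrictOrbitLattice R b),
    (LinearMap.toMatrixAlgEquiv bL).injective.comp (injective_restrictOrbitLattice hρ hb)⟩

end Representation

theorem GL_rat_bounded_finite_subgroups_general (n : ℕ) :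
    ∃ B : ℕ, ∀ G : Subgroup (GL (Fin n) ℚ), Finite G → Nat.card G ≤ B := by
  refine ⟨3 ^ (n * n), fun G _ => ?_⟩
  let ρ : Representation ℚ G (Fin n → ℚ) :=
    Matrix.toLinAlgEquiv'.toMonoidHom.comp ((Units.coeHom _).comp G.subtype)
  have hρ : Function.Injective ρ :=
    Matrix.toLinAlgEquiv'.injective.comp (Units.val_injective.comp Subtype.val_injective)
  obtain ⟨σ, hσ⟩ := ρ.exists_injective_monoidHom_matrix ℤ hρ
  calc Nat.card G ≤ Nat.card (Matrix (Fin n) (Fin n) (ZMod 3)) := by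
        simpa using Nat.card_le_card_of_injective _
          (Matrix.injective_mapMatrix_comp Nat.prime_three (by norm_num) hσ)
    _ = 3 ^ (n * n) := by
        change Nat.card (Fin n → Fin n → ZMod 3) = _
        simp [pow_mul]

/-- For every positive integer `n`, the group `GL_n(ℚ)` has bounded finite subgroups. -/
theorem GL_rat_bounded_finite_subgroups (n : ℕ) (hn : 0 < n) :
    ∃ B : ℕ, ∀ G : Subgroup (GL (Fin n) ℚ), Finite G → Nat.card G ≤ B :=
  GL_rat_bounded_finite_subgroups_general n
end

section
/- Let k be a field, and let A be a Noetherian commutative local k-algebra with maximal ideal m such that the composition k → A → A/m is an isomorphism (i.e., A has residue field k) and such that the intersection of the powers m^n over all n ≥ 1 is zero. Let G be a finite group acting on A by k-algebra automorphisms, and suppose the order of G is not divisible by the characteristic of k. If every element of G induces the identity map on the k-vector space m/m^2, then every element of G acts as the identity on A. -/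
/-!
Let `y = g • b - b`. If `G` acts trivially on `m/m²` it acts trivially on every `mⁿ/mⁿ⁺¹`,
so once `y ∈ mⁿ` we get `h • y ≡ y (mod mⁿ⁺¹)` for all `h`. But `∑ₕ h • y = 0`, because
`∑ₕ (h * g) • b = ∑ₕ h • b`; hence `|G| • y ∈ mⁿ⁺¹`, and `|G|` is a unit. Starting from
`y ∈ m²`, which holds since every element is a scalar modulo `m`, induction puts `y` in
`⋂ mⁿ = 0`.
-/

section

variable {A : Type*} [CommRing A] (I : Ideal A)

theorem map_sub_self_mem_pow_succ (f : A →+* A) (hf : ∀ x ∈ I, f x - x ∈ I ^ 2) (n : ℕ) :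
    ∀ x ∈ I ^ (n + 1), f x - x ∈ I ^ (n + 2) := by
  induction n with
  | zero => simpa using hf
  | succ n ih =>
    intro x hx
    rw [pow_succ] at hx
    refine Submodule.mul_induction_on hx (fun r hr s hs => ?_) (fun x y hx hy => ?_)
    · have hfs : f s ∈ I := by simpa using I.add_mem (I.pow_le_self two_ne_zero (hf s hs)) hs
      have e : f (r * s) - r * s = (f r - r) * f s + r * (f s - s) := by rw [map_mul]; ring
      rw [e]
      refine add_mem ?_ ?_
      · simpa [← pow_succ] using Ideal.mul_mem_mul (ih r hr) hfs
      · simpa [← pow_add, add_assoc] using Ideal.mul_mem_mul hr (hf s hs)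
    · simpa [map_add, add_sub_add_comm] using add_mem hx hy

variable {G : Type*} [Group G] [Finite G] [MulSemiringAction G A]

theorem smul_sub_self_mem_pow_succ_succ (hunit : IsUnit (Nat.card G : A))
    (htan : ∀ g : G, ∀ x ∈ I, g • x - x ∈ I ^ 2) {n : ℕ}
    (hn : ∀ (g : G) (b : A), g • b - b ∈ I ^ (n + 1)) (g : G) (b : A) :
    g • b - b ∈ I ^ (n + 2) := by
  have := Fintype.ofFinite G
  set y := g • b - b
  have hsum : ∑ h : G, h • y = 0 := by
    simp only [y, smul_sub, smul_smul, Finset.sum_sub_distrib]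
    exact sub_eq_zero.mpr (Equiv.sum_comp (Equiv.mulRight g) (· • b))
  have hdiff (h : G) : y - h • y ∈ I ^ (n + 2) := by
    rw [← neg_sub]
    exact neg_mem <|
      map_sub_self_mem_pow_succ I (MulSemiringAction.toRingHom G A h) (htan h) n y (hn g b)
  have hcard : (Nat.card G : A) * y ∈ I ^ (n + 2) := by
    have := Ideal.sum_mem (I ^ (n + 2)) (t := Finset.univ) fun h _ => hdiff h
    rwa [Finset.sum_sub_distrib, hsum, sub_zero, Finset.sum_const, Finset.card_univ,
      ← Nat.card_eq_fintype_card, nsmul_eq_mul] at this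
  exact (Ideal.unit_mul_mem_iff_mem _ hunit).mp hcard

theorem smul_eq_self_of_forall_smul_sub_self_mem_sq (hint : ⨅ n : ℕ, I ^ (n + 1) = ⊥)
    (hunit : IsUnit (Nat.card G : A))
    (hres : ∀ b : A, ∃ c : A, (∀ g : G, g • c = c) ∧ b - c ∈ I)
    (htan : ∀ g : G, ∀ x ∈ I, g • x - x ∈ I ^ 2) (g : G) (b : A) : g • b = b := by
  have hsq : ∀ (g : G) (b : A), g • b - b ∈ I ^ 2 := by
    intro g b
    obtain ⟨c, hc, hbc⟩ := hres b
    simpa [smul_sub, hc g] using htan g _ hbc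
  have hpow : ∀ n : ℕ, ∀ (g : G) (b : A), g • b - b ∈ I ^ (n + 1) := by
    intro n
    induction n with
    | zero => simpa using fun g b => I.pow_le_self two_ne_zero (hsq g b)
    | succ n ih => exact smul_sub_self_mem_pow_succ_succ I hunit htan ih
  have hbot : g • b - b ∈ ⨅ n : ℕ, I ^ (n + 1) := Submodule.mem_iInf _ |>.mpr (hpow · g b)
  simpa [hint, sub_eq_zero] using hbot

end

theorem fixed_tangent_action_trivial_general
    (k : Type*) [Field k] (A : Type*) [CommRing A]
    [Algebra k A] [IsLocalRing A]
    (hres : Function.Bijective (algebraMap k (A ⧸ IsLocalRing.maximalIdeal A)))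
    (hint : ⨅ n : ℕ, IsLocalRing.maximalIdeal A ^ (n + 1) = ⊥)
    (G : Type*) [Group G] [Finite G]
    (ρ : G →* (A ≃ₐ[k] A))
    (hord : ¬ (ringChar k ∣ Nat.card G))
    (htan : ∀ g : G, ∀ x ∈ IsLocalRing.maximalIdeal A,
      ρ g x - x ∈ (IsLocalRing.maximalIdeal A) ^ 2) :
    ∀ g : G, ∀ a : A, ρ g a = a := by
  -- `g • a` unfolds to `ρ g a`, so `htan` and the goal are already statements about this action
  let _ := MulSemiringAction.compHom A ρ
  have hunit : IsUnit (Nat.card G : A) := by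
    have hk : (Nat.card G : k) ≠ 0 := mt (CharP.cast_eq_zero_iff k (ringChar k) _).mp hord
    simpa using (isUnit_iff_ne_zero.mpr hk).map (algebraMap k A)
  have hscalar (b : A) :
      ∃ c : A, (∀ g : G, ρ g c = c) ∧ b - c ∈ IsLocalRing.maximalIdeal A := by
    obtain ⟨c, hc⟩ := hres.2 (Ideal.Quotient.mk _ b)
    refine ⟨algebraMap k A c, fun g => (ρ g).commutes c, Ideal.Quotient.eq.mp ?_⟩
    rw [← hc]; rfl
  exact smul_eq_self_of_forall_smul_sub_self_mem_sq _ hint hunit hscalar htan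

/-- Let `A` be a Noetherian commutative local `k`-algebra with maximal ideal `m`, residue
field `k` (i.e. the composition `k → A → A/m` is an isomorphism), and `⋂_{n ≥ 1} m^n = 0`.
Let `G` be a finite group of order not divisible by the characteristic of `k`, acting on `A`
by `k`-algebra automorphisms. If every element of `G` induces the identity on `m/m²`, then
every element of `G` acts as the identity on `A`. -/
theorem fixed_tangent_action_trivial
    (k : Type*) [Field k] (A : Type*) [CommRing A] [IsNoetherianRing A]
    [Algebra k A] [IsLocalRing A]
    (hres : Function.Bijective (algebraMap k (A ⧸ IsLocalRing.maximalIdeal A)))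
    (hint : ⨅ n : ℕ, IsLocalRing.maximalIdeal A ^ (n + 1) = ⊥)
    (G : Type*) [Group G] [Finite G]
    (ρ : G →* (A ≃ₐ[k] A))
    (hord : ¬ (ringChar k ∣ Nat.card G))
    (htan : ∀ g : G, ∀ x ∈ IsLocalRing.maximalIdeal A,
      ρ g x - x ∈ (IsLocalRing.maximalIdeal A) ^ 2) :
    ∀ g : G, ∀ a : A, ρ g a = a :=
  fixed_tangent_action_trivial_general k A hres hint G ρ hord htan
end
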